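/- arXiv:2604.06879 — 7 statements merged into one kernel-verified Lean document; each statement's English description precedes it below -/
import Mathlib

section
/- Unique normal forms for coherent processes (Lemma 1): if P is a coherent process (modulo a congruence ≅) of single-clock CCSˡᵐ, and P ⇓ N1 and P ⇓ N2, then N1 ≅ N2. -/
/-!
Two different (modulo `≅`) τ-steps out of a derivative of `P` are independent (case (ii)), so
coherence closes them into a diamond of at most one τ-step on each side, up to `≅`. Since `≅` is
a simulation for the transitions, reduction sequences can be transported along `≅`, and the usual
strip-lemma argument makes τ-reduction confluent modulo `≅` on derivatives of `P`. A normal form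
reduces only to itself, so the two joins collapse onto `N1` and `N2`.
-/

namespace CCSlm

/-- Labels 𝓛 = R ∪ {σ}: channel names with polarity (rendezvous actions) plus the single clock σ. -/
inductive Label (Name : Type) : Type
  | pos : Name → Label Name
  | neg : Name → Label Name
  | clock : Label Name

/-- Complementation ℓ ↦ ℓ̄ (an involution, with σ̄ = σ). -/
def Label.bar {Name : Type} : Label Name → Label Name
  | .pos a => .neg a
  | .neg a => .pos a
  | .clock => .clock

/-- Actions Act = 𝓛 ∪ {τ}. -/
inductive Act (Name : Type) : Type
  | lab : Label Name → Act Name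
  | tau : Act Name

/-- The (at most one) label of an action, as a set. -/
def Act.labels {Name : Type} : Act Name → Set (Label Name)
  | .lab ℓ => {ℓ}
  | .tau => ∅

/-- α ∈ R (α is a rendezvous action). -/
def Act.isRendezvous {Name : Type} : Act Name → Prop
  | .lab .clock => False
  | .tau => False
  | .lab _ => True

/-- α ∈ R ∪ {τ}. -/
def Act.isRendezvousOrTau {Name : Type} : Act Name → Prop
  | .lab .clock => False
  | _ => True

/-- Clock horizons H = {⊥,⊤}, as `Bool` (`false` = ⊥ = ∅, `true` = ⊤ = {σ}), ordered by `≤`. -/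
abbrev Horizon : Type := Bool

/-- Blocking relations B ⊆ H × 2^𝓛. -/
abbrev Blocking (Name : Type) : Type := Set (Horizon × Set (Label Name))

/-- Predictions ι : H → 2^𝓛. -/
abbrev Pred (Name : Type) : Type := Horizon → Set (Label Name)

variable {Name PName : Type}

/-- The induced blocking function [B](C) = { ℓ | ∃(C′,L′) ∈ B, C′ ⊆ C, ℓ ∈ L′ }. -/
def blockSet (B : Blocking Name) (C : Horizon) : Set (Label Name) :=
  { ℓ | ∃ C' L, (C', L) ∈ B ∧ C' ≤ C ∧ ℓ ∈ L }

/-- B′ ⊑ B iff [B′](C) ⊆ [B](C) for all C. -/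
def bleq (B' B : Blocking Name) : Prop :=
  ∀ C : Horizon, blockSet B' C ⊆ blockSet B C

/-- ι′ ⊑ ι iff ι′(C) ⊆ ι(C) for all C. -/
def pleq (ι' ι : Pred Name) : Prop :=
  ∀ C : Horizon, ι' C ⊆ ι C

/-- Pointwise union ι1 + ι2 of predictions. -/
def predAdd (ι1 ι2 : Pred Name) : Pred Name := fun C => ι1 C ∪ ι2 C

/-- The empty prediction ι^∅. -/
def emptyPred : Pred Name := fun _ => ∅

/-- eschews(ι, B): for all (C,L′) ∈ B, ι(C) ∩ {ℓ̄ | ℓ ∈ L′} = ∅. -/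
def eschews (ι : Pred Name) (B : Blocking Name) : Prop :=
  ∀ C L, (C, L) ∈ B → ι C ∩ (Label.bar '' L) = ∅

/-- Process terms of single-clock CCSˡᵐ (threads are merged into the process grammar):
process names, parallel composition, restriction, inactive 0_C, prefix α:L′.P, and sum. -/
inductive Proc (Name PName : Type) : Type
  | name : PName → Proc Name PName
  | par : Proc Name PName → Proc Name PName → Proc Name PName
  | restr : Proc Name PName → Set Name → Proc Name PName
  | nil : Horizon → Proc Name PName
  | pre : Act Name → Set (Label Name) → Proc Name PName → Proc Name PName
  | sum : Proc Name PName → Proc Name PName → Proc Name PName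

/-- The labels A′ ∪ Ā′ of a set A′ of channel names. -/
def chanLabels (A : Set Name) : Set (Label Name) :=
  { ℓ | ∃ a ∈ A, ℓ = .pos a ∨ ℓ = .neg a }

/-- σ ∈ 𝓛(P): the clock occurs free in P (through unfolding of process names). -/
inductive HasClock (env : PName → Proc Name PName) : Proc Name PName → Prop
  | nil : HasClock env (.nil true)
  | preClock (L : Set (Label Name)) (P : Proc Name PName) :
      HasClock env (.pre (.lab .clock) L P)
  | preCont {P : Proc Name PName} (α : Act Name) (L : Set (Label Name)) :
      HasClock env P → HasClock env (.pre α L P)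
  | parL {P : Proc Name PName} (Q : Proc Name PName) :
      HasClock env P → HasClock env (.par P Q)
  | parR (P : Proc Name PName) {Q : Proc Name PName} :
      HasClock env Q → HasClock env (.par P Q)
  | sumL {M : Proc Name PName} (N : Proc Name PName) :
      HasClock env M → HasClock env (.sum M N)
  | sumR (M : Proc Name PName) {N : Proc Name PName} :
      HasClock env N → HasClock env (.sum M N)
  | restr {P : Proc Name PName} (A : Set Name) :
      HasClock env P → HasClock env (.restr P A)
  | name (p : PName) : HasClock env (env p) → HasClock env (.name p)

open Classical in
/-- The clock horizon clk(P) = 𝓛(P) ∩ {σ} ∈ H. -/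
noncomputable def clk (env : PName → Proc Name PName) (P : Proc Name PName) : Horizon :=
  if HasClock env P then true else false

/-- Initial actions iA of a thread (as a set of labels; τ contributes nothing to predictions). -/
def iA : Proc Name PName → Set (Label Name)
  | .pre α _ _ => α.labels
  | .sum M N => iA M ∪ iA N
  | _ => ∅

/-- One level of the bounded syntactic prediction; `rec` handles process names
(it is the bounded prediction at the next-lower unfolding bound). -/
def wilAgo (env : PName → Proc Name PName)
    (rec : Horizon → Proc Name PName → Set (Label Name)) :
    Horizon → Proc Name PName → Set (Label Name)
  | _, .nil _ => ∅
  | C, .pre (.lab .clock) _ P =>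
      if C = true then {Label.clock} else insert Label.clock (wilAgo env rec C P)
  | C, .pre α _ P => α.labels ∪ wilAgo env rec C P
  | C, .restr P A => wilAgo env rec C P \ chanLabels A
  | C, .name p => rec C (env p)
  | C, .par P Q => wilAgo env rec C P ∪ wilAgo env rec C Q
  | C, .sum M N => wilAgo env rec C M ∪ wilAgo env rec C N

/-- The bounded syntactic prediction wilAⁿ_C(P) with at most n unfoldings of process names. -/
def wilA (env : PName → Proc Name PName) : ℕ → Horizon → Proc Name PName → Set (Label Name)
  | 0 => wilAgo env fun _ _ => ∅
  | n + 1 => wilAgo env (wilA env n)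

/-- iA*_C(P) = ⋃ₙ wilAⁿ_C(P): the labels occurring syntactically in P before any clock in C. -/
def iAstar (env : PName → Proc Name PName) (C : Horizon) (P : Proc Name PName) :
    Set (Label Name) :=
  ⋃ n : ℕ, wilA env n C P

/-- The prediction iA*₋(P) : C ↦ iA*_C(P). -/
def iAstarPred (env : PName → Proc Name PName) (P : Proc Name PName) : Pred Name :=
  fun C => iAstar env C P

/-- Restriction B↾A of a blocking relation: remove A ∪ Ā from each entry. -/
def restrB (B : Blocking Name) (A : Set Name) : Blocking Name :=
  { q | ∃ C L, (C, L) ∈ B ∧ q = (C, L \ chanLabels A) }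

/-- Restriction ι↾A of a prediction: remove A ∪ Ā pointwise. -/
def restrPred (ι : Pred Name) (A : Set Name) : Pred Name :=
  fun C => ι C \ chanLabels A

/-- Result ℓ ∥ ℓ̄ of synchronisation: a ∥ ā = τ and σ ∥ σ = σ. -/
def syncAct {Name : Type} : Label Name → Act Name
  | .clock => .lab .clock
  | _ => .tau

/-- The strategic labelled transition system of single-clock CCSˡᵐ (Fig. 1):
P —α:B[ι]→ Q. -/
inductive Step (env : PName → Proc Name PName) :
    Proc Name PName → Act Name → Blocking Name → Pred Name → Proc Name PName → Prop
  | act (α : Act Name) (L : Set (Label Name)) (P : Proc Name PName) :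
      Step env (.pre α L P) α {(clk env P, L)} emptyPred P
  | sumL {M : Proc Name PName} {α : Act Name} {B : Blocking Name} {ι : Pred Name}
      {P : Proc Name PName} (N : Proc Name PName) :
      Step env M α B ι P →
      Step env (.sum M N) α B (fun C => ι C ∪ (iA N \ α.labels)) P
  | sumR (M : Proc Name PName) {N : Proc Name PName} {α : Act Name} {B : Blocking Name}
      {ι : Pred Name} {P : Proc Name PName} :
      Step env N α B ι P →
      Step env (.sum M N) α B (fun C => ι C ∪ (iA M \ α.labels)) P
  | con {p : PName} {α : Act Name} {B : Blocking Name} {ι : Pred Name} {P' : Proc Name PName} :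
      Step env (env p) α B ι P' →
      Step env (.name p) α B ι P'
  | com {P1 P2 P1' P2' : Proc Name PName} {ℓ : Label Name} {B1 B2 : Blocking Name}
      {ι1 ι2 : Pred Name} :
      Step env P1 (.lab ℓ) B1 ι1 P1' →
      Step env P2 (.lab ℓ.bar) B2 ι2 P2' →
      eschews ι1 B2 → eschews ι2 B1 →
      Step env (.par P1 P2) (syncAct ℓ) (B1 ∪ B2) (predAdd ι1 ι2) (.par P1' P2')
  | parL {P : Proc Name PName} {α : Act Name} {B : Blocking Name} {ι : Pred Name}
      {P' : Proc Name PName} (Q : Proc Name PName) :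
      Step env P α B ι P' →
      (α = .lab .clock → ¬ HasClock env Q) →
      eschews (iAstarPred env Q) B →
      Step env (.par P Q) α B (predAdd ι (iAstarPred env Q)) (.par P' Q)
  | parR (P : Proc Name PName) {Q : Proc Name PName} {α : Act Name} {B : Blocking Name}
      {ι : Pred Name} {Q' : Proc Name PName} :
      Step env Q α B ι Q' →
      (α = .lab .clock → ¬ HasClock env P) →
      eschews (iAstarPred env P) B →
      Step env (.par P Q) α B (predAdd ι (iAstarPred env P)) (.par P Q')
  | restr {P : Proc Name PName} {α : Act Name} {B : Blocking Name} {ι : Pred Name}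
      {Q : Proc Name PName} (A : Set Name) :
      Step env P α B ι Q →
      (∀ ℓ, α = .lab ℓ → ℓ ∉ chanLabels A) →
      Step env (.restr P A) α (restrB B A) (restrPred ι A) (.restr Q A)

/-- One strategic step (labels existentially quantified). -/
def Tr (env : PName → Proc Name PName) (P Q : Proc Name PName) : Prop :=
  ∃ α B ι, Step env P α B ι Q

/-- Q is a derivative of P: reachable by strategic transitions. -/
def Deriv (env : PName → Proc Name PName) : Proc Name PName → Proc Name PName → Prop :=
  Relation.ReflTransGen (Tr env)

/-- A congruence on processes: an equivalence compatible with the process operators. -/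
structure IsCongruence (cong : Proc Name PName → Proc Name PName → Prop) : Prop where
  equiv : Equivalence cong
  pre : ∀ (α : Act Name) (L : Set (Label Name)) {P P' : Proc Name PName},
      cong P P' → cong (.pre α L P) (.pre α L P')
  sum : ∀ {M M' N N' : Proc Name PName}, cong M M' → cong N N' → cong (.sum M N) (.sum M' N')
  par : ∀ {P P' Q Q' : Proc Name PName}, cong P P' → cong Q Q' → cong (.par P Q) (.par P' Q')
  restr : ∀ (A : Set Name) {P P' : Proc Name PName}, cong P P' → cong (.restr P A) (.restr P' A)

/-- P is observable (modulo cong). -/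
def Observable (env : PName → Proc Name PName)
    (cong : Proc Name PName → Proc Name PName → Prop) (P : Proc Name PName) : Prop :=
  ∀ Q Q1 Q2 α1 α2 B1 B2 ι1 ι2,
    Deriv env P Q →
    Step env Q α1 B1 ι1 Q1 → Step env Q α2 B2 ι2 Q2 →
    (α1 ≠ α2 ∨ ¬ cong Q1 Q2) →
    ∀ ℓ1 ℓ2 : Label Name, α1 = .lab ℓ1 → α2 = .lab ℓ2 → ℓ1 ∈ ι2 true ∧ ℓ2 ∈ ι1 true

/-- α ∉ [B](⊤). -/
def unblockedBy (α : Act Name) (B : Blocking Name) : Prop :=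
  ∀ ℓ : Label Name, α = .lab ℓ → ℓ ∉ blockSet B true

/-- Independence (modulo cong) of two transitions out of the same process. -/
def Independent (cong : Proc Name PName → Proc Name PName → Prop)
    (α1 : Act Name) (B1 : Blocking Name) (Q1 : Proc Name PName)
    (α2 : Act Name) (B2 : Blocking Name) (Q2 : Proc Name PName) : Prop :=
  (α1 = .lab .clock ∧ α2 = .lab .clock) ∨
  (α1.isRendezvousOrTau ∧ α2.isRendezvousOrTau ∧
    ((¬ (α1 = .tau ∧ α2 = .tau) ∧ unblockedBy α1 B2 ∧ unblockedBy α2 B1) ∨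
     (α1 = α2 ∧ ¬ cong Q1 Q2)))

/-- The Diamond Property (CR) of a process Q (modulo cong). -/
def DiamondCR (env : PName → Proc Name PName)
    (cong : Proc Name PName → Proc Name PName → Prop) (Q : Proc Name PName) : Prop :=
  ∀ α1 B1 ι1 Q1 α2 B2 ι2 Q2,
    Step env Q α1 B1 ι1 Q1 → Step env Q α2 B2 ι2 Q2 →
    Independent cong α1 B1 Q1 α2 B2 Q2 →
    ∃ Q1' Q2' B1' ι1' B2' ι2',
      cong Q1' Q2' ∧
      Step env Q1 α2 B2' ι2' Q1' ∧ Step env Q2 α1 B1' ι1' Q2' ∧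
      bleq B1' B1 ∧ bleq B2' B2 ∧
      (α1.isRendezvous → pleq ι1' ι1) ∧ (α2.isRendezvous → pleq ι2' ι2)

/-- P is coherent (modulo cong): observable and every derivative satisfies (CR). -/
def Coherent (env : PName → Proc Name PName)
    (cong : Proc Name PName → Proc Name PName → Prop) (P : Proc Name PName) : Prop :=
  Observable env cong P ∧ ∀ Q, Deriv env P Q → DiamondCR env cong Q

/-- N is a normal form: no τ-transitions. -/
def NormalForm (env : PName → Proc Name PName) (N : Proc Name PName) : Prop :=
  ∀ B ι N', ¬ Step env N .tau B ι N'

/-- One reduction (τ-labelled) step. -/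
def Red (env : PName → Proc Name PName) (P Q : Proc Name PName) : Prop :=
  ∃ B ι, Step env P .tau B ι Q

/-- P ⇓ N: P reduces to the normal form N by finitely many τ-steps. -/
def ReducesTo (env : PName → Proc Name PName) (P N : Proc Name PName) : Prop :=
  Relation.ReflTransGen (Red env) P N ∧ NormalForm env N

/-- Strong bisimulations for the strategic LTS (matching full strategic labels). -/
def IsStrategicBisim (env : PName → Proc Name PName)
    (R : Proc Name PName → Proc Name PName → Prop) : Prop :=
  ∀ P Q, R P Q →
    (∀ α B ι P', Step env P α B ι P' → ∃ Q', Step env Q α B ι Q' ∧ R P' Q') ∧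
    (∀ α B ι Q', Step env Q α B ι Q' → ∃ P', Step env P α B ι P' ∧ R P' Q')

/-- Strong bisimilarity for the strategic LTS. -/
def StrategicBisim (env : PName → Proc Name PName) (P Q : Proc Name PName) : Prop :=
  ∃ R, IsStrategicBisim env R ∧ R P Q

/-- Milner's CCS labelled transition system P —α→ Q on the same syntax. -/
inductive CCSStep (env : PName → Proc Name PName) :
    Proc Name PName → Act Name → Proc Name PName → Prop
  | act (α : Act Name) (L : Set (Label Name)) (P : Proc Name PName) :
      CCSStep env (.pre α L P) α P
  | sumL {M : Proc Name PName} {α : Act Name} {P : Proc Name PName} (N : Proc Name PName) :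
      CCSStep env M α P → CCSStep env (.sum M N) α P
  | sumR (M : Proc Name PName) {N : Proc Name PName} {α : Act Name} {P : Proc Name PName} :
      CCSStep env N α P → CCSStep env (.sum M N) α P
  | con {p : PName} {α : Act Name} {P' : Proc Name PName} :
      CCSStep env (env p) α P' → CCSStep env (.name p) α P'
  | com {P1 P2 P1' P2' : Proc Name PName} (ℓ : Label Name) :
      CCSStep env P1 (.lab ℓ) P1' → CCSStep env P2 (.lab ℓ.bar) P2' →
      CCSStep env (.par P1 P2) .tau (.par P1' P2')
  | parL {P : Proc Name PName} {α : Act Name} {P' : Proc Name PName} (Q : Proc Name PName) :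
      CCSStep env P α P' → CCSStep env (.par P Q) α (.par P' Q)
  | parR (P : Proc Name PName) {Q : Proc Name PName} {α : Act Name} {Q' : Proc Name PName} :
      CCSStep env Q α Q' → CCSStep env (.par P Q) α (.par P Q')
  | restr {P : Proc Name PName} {α : Act Name} {Q : Proc Name PName} (A : Set Name) :
      CCSStep env P α Q → (∀ ℓ, α = .lab ℓ → ℓ ∉ chanLabels A) →
      CCSStep env (.restr P A) α (.restr Q A)

def CCSTr (env : PName → Proc Name PName) (P Q : Proc Name PName) : Prop :=
  ∃ α, CCSStep env P α Q

def CCSDeriv (env : PName → Proc Name PName) : Proc Name PName → Proc Name PName → Prop :=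
  Relation.ReflTransGen (CCSTr env)

/-- Strong bisimulations for Milner's CCS LTS. -/
def IsCCSBisim (env : PName → Proc Name PName)
    (R : Proc Name PName → Proc Name PName → Prop) : Prop :=
  ∀ P Q, R P Q →
    (∀ α P', CCSStep env P α P' → ∃ Q', CCSStep env Q α Q' ∧ R P' Q') ∧
    (∀ α Q', CCSStep env Q α Q' → ∃ P', CCSStep env P α P' ∧ R P' Q')

/-- Strong bisimilarity ∼ for Milner's CCS. -/
def CCSBisim (env : PName → Proc Name PName) (P Q : Proc Name PName) : Prop :=
  ∃ R, IsCCSBisim env R ∧ R P Q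

/-- P is determinate (modulo ∼) in Milner's CCS. -/
def CCSDeterminate (env : PName → Proc Name PName) (P : Proc Name PName) : Prop :=
  ∀ Q, CCSDeriv env P Q → ∀ α Q1 Q2,
    CCSStep env Q α Q1 → CCSStep env Q α Q2 → CCSBisim env Q1 Q2

/-- P is strongly confluent (modulo ∼) in Milner's CCS. -/
def CCSStronglyConfluent (env : PName → Proc Name PName) (P : Proc Name PName) : Prop :=
  CCSDeterminate env P ∧
  ∀ Q, CCSDeriv env P Q → ∀ α1 α2 Q1 Q2, α1 ≠ α2 →
    CCSStep env Q α1 Q1 → CCSStep env Q α2 Q2 →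
    ∃ Q1' Q2', CCSBisim env Q1' Q2' ∧ CCSStep env Q1 α2 Q1' ∧ CCSStep env Q2 α1 Q2'

/-- The clock-free, priority-free fragment: inactive subterms are 0_⊥, no prefix action is σ,
and all blocking sets are empty. -/
def ClockFree : Proc Name PName → Prop
  | .nil C => C = false
  | .pre α L P => α ≠ .lab .clock ∧ L = ∅ ∧ ClockFree P
  | .sum M N => ClockFree M ∧ ClockFree N
  | .par P Q => ClockFree P ∧ ClockFree Q
  | .restr P _ => ClockFree P
  | .name _ => True

/-- Well-formedness: direct subprocesses of threads have the same clock horizon as the thread. -/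
def WF (env : PName → Proc Name PName) : Proc Name PName → Prop
  | .nil _ => True
  | .pre α L P => WF env P ∧ (HasClock env (.pre α L P) ↔ HasClock env P)
  | .sum M N => WF env M ∧ WF env N ∧ (HasClock env M ↔ HasClock env N)
  | .par P Q => WF env P ∧ WF env Q
  | .restr P _ => WF env P
  | .name _ => True

/-- P has exactly one derivable strategic transition, namely α to Q (with some label B[ι]). -/
def UniqueStep (env : PName → Proc Name PName) (P : Proc Name PName) (α : Act Name)
    (Q : Proc Name PName) : Prop :=
  ∃ B ι, Step env P α B ι Q ∧
    ∀ α' B' ι' Q', Step env P α' B' ι' Q' → α' = α ∧ B' = B ∧ ι' = ι ∧ Q' = Q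

end CCSlm

namespace Relation

section ConfluenceModulo

variable {α : Type*} {r e : α → α → Prop}

theorem ReflTransGen.exists_of_simulation
    (sim : ∀ a b a', e a b → r a a' → ∃ b', r b b' ∧ e a' b')
    {a a' b : α} (h : ReflTransGen r a a') (hab : e a b) :
    ∃ b', ReflTransGen r b b' ∧ e a' b' := by
  induction h generalizing b with
  | refl => exact ⟨b, .refl, hab⟩
  | tail _ hstep ih =>
    obtain ⟨c, hbc, hc⟩ := ih hab
    obtain ⟨d, hcd, hd⟩ := sim _ _ _ hc hstep
    exact ⟨d, hbc.tail hcd, hd⟩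

variable (he : Equivalence e) (sim : ∀ a b a', e a b → r a a' → ∃ b', r b b' ∧ e a' b')
  {S : α → Prop} (hS : ∀ a b, S a → r a b → S b)
  (diamond : ∀ a b c, S a → r a b → r a c →
    ∃ b' c', ReflGen r b b' ∧ ReflGen r c c' ∧ e b' c')
include he sim hS diamond

theorem strip_modulo {a b c : α} (ha : S a) (hab : r a b) (hac : ReflTransGen r a c) :
    ∃ b' c', ReflTransGen r b b' ∧ ReflTransGen r c c' ∧ e b' c' := by
  induction hac using ReflTransGen.head_induction_on generalizing b with
  | refl => exact ⟨b, b, .refl, .single hab, he.refl b⟩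
  | head hstep hrest ih =>
    obtain ⟨b₁, a₁, hbb₁, ha₁, hb₁a₁⟩ := diamond _ _ _ ha hab hstep
    cases ha₁ with
    | refl =>
      obtain ⟨d, hb₁d, hd⟩ := hrest.exists_of_simulation sim (he.symm hb₁a₁)
      exact ⟨d, _, hbb₁.to_reflTransGen.trans hb₁d, .refl, he.symm hd⟩
    | single ha₁ =>
      obtain ⟨x, y, hx, hy, hxy⟩ := ih (hS _ _ ha hstep) ha₁
      obtain ⟨d, hb₁d, hd⟩ := hx.exists_of_simulation sim (he.symm hb₁a₁)
      exact ⟨d, y, hbb₁.to_reflTransGen.trans hb₁d, hy, he.trans (he.symm hd) hxy⟩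

theorem confluent_modulo {a b c : α} (ha : S a) (hab : ReflTransGen r a b)
    (hac : ReflTransGen r a c) :
    ∃ b' c', ReflTransGen r b b' ∧ ReflTransGen r c c' ∧ e b' c' := by
  induction hab using ReflTransGen.head_induction_on generalizing c with
  | refl => exact ⟨c, c, hac, .refl, he.refl c⟩
  | head hstep _ ih =>
    obtain ⟨x, y, hx, hy, hxy⟩ := strip_modulo he sim hS diamond ha hstep hac
    obtain ⟨u, v, hu, hv, huv⟩ := ih (hS _ _ ha hstep) hx
    obtain ⟨w, hyw, hvw⟩ := hv.exists_of_simulation sim hxy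
    exact ⟨u, w, hu, hy.trans hyw, he.trans huv hvw⟩

end ConfluenceModulo

end Relation

namespace CCSlm

variable {Name PName : Type} {env : PName → Proc Name PName}
  {cong : Proc Name PName → Proc Name PName → Prop}

theorem Deriv.red {P Q Q' : Proc Name PName} (hQ : Deriv env P Q) (h : Red env Q Q') :
    Deriv env P Q' :=
  let ⟨_, _, hstep⟩ := h
  hQ.tail ⟨_, _, _, hstep⟩

theorem DiamondCR.red_diamond {Q Q1 Q2 : Proc Name PName} (hQ : DiamondCR env cong Q)
    (h1 : Red env Q Q1) (h2 : Red env Q Q2) :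
    ∃ Q1' Q2', Relation.ReflGen (Red env) Q1 Q1' ∧ Relation.ReflGen (Red env) Q2 Q2' ∧
      cong Q1' Q2' := by
  by_cases hc : cong Q1 Q2
  · exact ⟨Q1, Q2, .refl, .refl, hc⟩
  obtain ⟨B1, ι1, s1⟩ := h1
  obtain ⟨B2, ι2, s2⟩ := h2
  obtain ⟨Q1', Q2', _, _, _, _, hc', t1, t2, -⟩ :=
    hQ _ _ _ _ _ _ _ _ s1 s2 (Or.inr ⟨trivial, trivial, Or.inr ⟨rfl, hc⟩⟩)
  exact ⟨Q1', Q2', .single ⟨_, _, t1⟩, .single ⟨_, _, t2⟩, hc'⟩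

theorem NormalForm.eq_of_reflTransGen {N Q : Proc Name PName} (hN : NormalForm env N)
    (h : Relation.ReflTransGen (Red env) N Q) : Q = N := by
  rcases h.cases_head with rfl | ⟨_, ⟨_, _, hstep⟩, _⟩
  · rfl
  · exact absurd hstep (hN _ _ _)

/-- Lemma 1 (unique normal forms for coherent processes): if P is coherent modulo a
congruence ≅ (compatible with the strategic transitions), and P ⇓ N1 and P ⇓ N2,
then N1 ≅ N2. -/
theorem unique_normal_forms {Name PName : Type} (env : PName → Proc Name PName)
    (cong : Proc Name PName → Proc Name PName → Prop)
    (hcong : IsCongruence cong)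
    (hcompat : ∀ P Q, cong P Q → ∀ α B ι P', Step env P α B ι P' →
      ∃ Q', Step env Q α B ι Q' ∧ cong P' Q')
    (P N1 N2 : Proc Name PName)
    (hP : Coherent env cong P)
    (h1 : ReducesTo env P N1) (h2 : ReducesTo env P N2) :
    cong N1 N2 := by
  have sim : ∀ Q R Q', cong Q R → Red env Q Q' → ∃ R', Red env R R' ∧ cong Q' R' :=
    fun Q R Q' hQR ⟨_, _, hstep⟩ =>
      let ⟨R', hR, hQR'⟩ := hcompat Q R hQR _ _ _ _ hstep
      ⟨R', ⟨_, _, hR⟩, hQR'⟩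
  obtain ⟨M1, M2, hM1, hM2, hM⟩ :=
    Relation.confluent_modulo hcong.equiv sim (fun _ _ hQ h => Deriv.red hQ h)
      (fun Q _ _ hQ => (hP.2 Q hQ).red_diamond) .refl h1.1 h2.1
  rwa [h1.2.eq_of_reflTransGen hM1, h2.2.eq_of_reflTransGen hM2] at hM

end CCSlm
end

section
/- Preservation of coherence under restriction (Theorem 2, second part): if P is a coherent process (modulo a congruence ≅) of single-clock CCSˡᵐ and A′ is a set of channel names, then P↾A′ is coherent (modulo ≅). -/
namespace CCSlm
/-!
The only rule for `P↾A′` is (Restr), so every transition of `P↾A′` comes from one of `P` whose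
action avoids `A′ ∪ Ā′`, and every derivative of `P↾A′` is `Q↾A′` for a derivative `Q` of `P`.
Restriction only deletes the labels of `A′ ∪ Ā′` from blocking sets and predictions, which never
hides an observable action: independence in `Q↾A′` implies independence in `Q`, and the diamonds
and predictions of `Q` restrict to those of `Q↾A′`.
-/

section Restriction

variable {Name PName : Type} {env : PName → Proc Name PName} {A : Set Name}

lemma Step.restr_inv {P Q : Proc Name PName} {α : Act Name} {B : Blocking Name} {ι : Pred Name}
    (h : Step env (.restr P A) α B ι Q) :
    ∃ B₀ ι₀ Q₀, Step env P α B₀ ι₀ Q₀ ∧ B = restrB B₀ A ∧ ι = restrPred ι₀ A ∧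
      Q = .restr Q₀ A ∧ ∀ ℓ, α = .lab ℓ → ℓ ∉ chanLabels A := by
  cases h with
  | restr A h hα => exact ⟨_, _, _, h, rfl, rfl, rfl, hα⟩

lemma Deriv.restr_inv {P R : Proc Name PName} (h : Deriv env (.restr P A) R) :
    ∃ Q, Deriv env P Q ∧ R = .restr Q A := by
  induction h with
  | refl => exact ⟨P, .refl, rfl⟩
  | tail _ hstep ih =>
    obtain ⟨Q, hQ, rfl⟩ := ih
    obtain ⟨α, B, ι, hstep⟩ := hstep
    obtain ⟨B₀, ι₀, Q₀, h₀, -, -, rfl, -⟩ := hstep.restr_inv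
    exact ⟨Q₀, hQ.tail ⟨_, _, _, h₀⟩, rfl⟩

lemma blockSet_restrB (B : Blocking Name) (C : Horizon) :
    blockSet (restrB B A) C = blockSet B C \ chanLabels A := by
  ext ℓ
  constructor
  · rintro ⟨C', L', ⟨C'', L'', hmem, ⟨⟩⟩, hle, hℓ, hℓA⟩
    exact ⟨⟨C', L'', hmem, hle, hℓ⟩, hℓA⟩
  · rintro ⟨⟨C', L', hmem, hle, hℓ⟩, hℓA⟩
    exact ⟨C', L' \ chanLabels A, ⟨C', L', hmem, rfl⟩, hle, hℓ, hℓA⟩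

lemma bleq.restrB {B' B : Blocking Name} (h : bleq B' B) :
    bleq (restrB B' A) (restrB B A) := fun C => by
  simpa only [blockSet_restrB] using Set.sdiff_subset_sdiff_left (h C)

lemma pleq.restrPred {ι' ι : Pred Name} (h : pleq ι' ι) :
    pleq (restrPred ι' A) (restrPred ι A) := fun C =>
  Set.sdiff_subset_sdiff_left (h C)

lemma unblockedBy.of_restrB {α : Act Name} {B : Blocking Name}
    (h : unblockedBy α (restrB B A)) (hα : ∀ ℓ, α = .lab ℓ → ℓ ∉ chanLabels A) :
    unblockedBy α B := fun ℓ e hℓ =>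
  h ℓ e (by rw [blockSet_restrB]; exact ⟨hℓ, hα ℓ e⟩)

variable {cong : Proc Name PName → Proc Name PName → Prop}

lemma Independent.of_restr (hcong : ∀ {Q Q'}, cong Q Q' → cong (.restr Q A) (.restr Q' A))
    {α₁ α₂ : Act Name} {B₁ B₂ : Blocking Name} {Q₁ Q₂ : Proc Name PName}
    (h : Independent cong α₁ (restrB B₁ A) (.restr Q₁ A) α₂ (restrB B₂ A) (.restr Q₂ A))
    (hα₁ : ∀ ℓ, α₁ = .lab ℓ → ℓ ∉ chanLabels A) (hα₂ : ∀ ℓ, α₂ = .lab ℓ → ℓ ∉ chanLabels A) :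
    Independent cong α₁ B₁ Q₁ α₂ B₂ Q₂ := by
  rcases h with hclock | ⟨r₁, r₂, ⟨hτ, u₁, u₂⟩ | ⟨heq, hncong⟩⟩
  · exact .inl hclock
  · exact .inr ⟨r₁, r₂, .inl ⟨hτ, u₁.of_restrB hα₁, u₂.of_restrB hα₂⟩⟩
  · exact .inr ⟨r₁, r₂, .inr ⟨heq, fun hc => hncong (hcong hc)⟩⟩

lemma Observable.restr (hcong : ∀ {Q Q'}, cong Q Q' → cong (.restr Q A) (.restr Q' A))
    {P : Proc Name PName} (hP : Observable env cong P) :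
    Observable env cong (.restr P A) := by
  intro R R₁ R₂ α₁ α₂ B₁ B₂ ι₁ ι₂ hR h₁ h₂ hne ℓ₁ ℓ₂ e₁ e₂
  obtain ⟨Q, hQ, rfl⟩ := hR.restr_inv
  obtain ⟨B₁', ι₁', Q₁, s₁, rfl, rfl, rfl, hα₁⟩ := h₁.restr_inv
  obtain ⟨B₂', ι₂', Q₂, s₂, rfl, rfl, rfl, hα₂⟩ := h₂.restr_inv
  have hne' : α₁ ≠ α₂ ∨ ¬ cong Q₁ Q₂ := hne.imp_right fun hnc hc => hnc (hcong hc)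
  obtain ⟨m₁, m₂⟩ := hP Q Q₁ Q₂ α₁ α₂ B₁' B₂' ι₁' ι₂' hQ s₁ s₂ hne' ℓ₁ ℓ₂ e₁ e₂
  exact ⟨⟨m₁, hα₁ ℓ₁ e₁⟩, ⟨m₂, hα₂ ℓ₂ e₂⟩⟩

lemma DiamondCR.restr (hcong : ∀ {Q Q'}, cong Q Q' → cong (.restr Q A) (.restr Q' A))
    {Q : Proc Name PName} (hQ : DiamondCR env cong Q) :
    DiamondCR env cong (.restr Q A) := by
  intro α₁ B₁ ι₁ R₁ α₂ B₂ ι₂ R₂ h₁ h₂ hind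
  obtain ⟨B₁', ι₁', Q₁, s₁, rfl, rfl, rfl, hα₁⟩ := h₁.restr_inv
  obtain ⟨B₂', ι₂', Q₂, s₂, rfl, rfl, rfl, hα₂⟩ := h₂.restr_inv
  obtain ⟨Q₁', Q₂', C₁, κ₁, C₂, κ₂, hc, t₁, t₂, hb₁, hb₂, hp₁, hp₂⟩ :=
    hQ α₁ B₁' ι₁' Q₁ α₂ B₂' ι₂' Q₂ s₁ s₂ (hind.of_restr hcong hα₁ hα₂)
  exact ⟨.restr Q₁' A, .restr Q₂' A, restrB C₁ A, restrPred κ₁ A, restrB C₂ A,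
    restrPred κ₂ A, hcong hc, .restr A t₁ hα₂, .restr A t₂ hα₁, hb₁.restrB, hb₂.restrB,
    fun hr => (hp₁ hr).restrPred, fun hr => (hp₂ hr).restrPred⟩

end Restriction

/-- Theorem 2, second part: coherence is preserved by restriction. -/
theorem coherence_preserved_by_restriction {Name PName : Type} (env : PName → Proc Name PName)
    (cong : Proc Name PName → Proc Name PName → Prop)
    (hcong : IsCongruence cong)
    (P : Proc Name PName) (A' : Set Name)
    (hP : Coherent env cong P) :
    Coherent env cong (.restr P A') := by
  obtain ⟨hobs, hdiamond⟩ := hP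
  refine ⟨hobs.restr (hcong.restr A'), fun R hR => ?_⟩
  obtain ⟨Q, hQ, rfl⟩ := hR.restr_inv
  exact (hdiamond Q hQ).restr (hcong.restr A')

end CCSlm
end

section
/- Antitonicity of predictions (Constructivity Assumption, proved by induction on the LTS rules): for every strategic transition P —α:B[ι]→ Q derivable in the labelled transition system of single-clock CCSˡᵐ, the prediction ι is antitone in the clock horizon: for all clock horizons C, C′ ∈ H, if C ⊆ C′ then ι(C′) ⊆ ι(C). -/
/-!
Every prediction produced by the rules is assembled from the empty prediction, constant sets
(Sum), pointwise unions (Com, Par), pointwise differences (Restr), and syntactic predictions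
iA*₋(Q) (Par); the first four operations preserve antitonicity, so everything reduces to the
syntactic predictions. There the horizon matters only at a clock prefix σ.P: at horizon ⊤ the scan
stops there and yields {σ}, at ⊥ it yields σ together with the scan of P, which is larger.
-/

namespace CCSlm

variable {Name PName : Type} (env : PName → Proc Name PName)

theorem wilAgo_antitone (rec : Horizon → Proc Name PName → Set (Label Name))
    (hrec : ∀ P, Antitone (rec · P)) (P : Proc Name PName) :
    Antitone (wilAgo env rec · P) := by
  induction P with
  | nil => exact antitone_const
  | name p => exact hrec (env p)
  | par P Q ihP ihQ => exact ihP.union ihQ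
  | sum M N ihM ihN => exact ihM.union ihN
  | restr P A ih => exact fun _ _ h => Set.sdiff_subset_sdiff_left (ih h)
  | pre α L P ih =>
    rcases α with (a | a | _) | _
    case lab.clock =>
      rintro (_ | _) (_ | _) h <;> simp [wilAgo, Bool.le_iff_imp] at h ⊢
    all_goals exact antitone_const.union ih

theorem wilA_antitone (n : ℕ) (P : Proc Name PName) : Antitone (wilA env n · P) := by
  induction n generalizing P with
  | zero => exact wilAgo_antitone env _ (fun _ => antitone_const) P
  | succ n ih => exact wilAgo_antitone env _ ih P

theorem iAstarPred_antitone (P : Proc Name PName) : Antitone (iAstarPred env P) :=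
  fun _ _ h => Set.iUnion_mono fun n => wilA_antitone env n P h

/-- Antitonicity of predictions (Constructivity Assumption): for every derivable strategic
transition P —α:B[ι]→ Q, if C ⊆ C′ then ι(C′) ⊆ ι(C). -/
theorem prediction_antitone {Name PName : Type} (env : PName → Proc Name PName)
    {P Q : Proc Name PName} {α : Act Name} {B : Blocking Name} {ι : Pred Name}
    (h : Step env P α B ι Q) :
    ∀ C C' : Horizon, C ≤ C' → ι C' ⊆ ι C := by
  suffices Antitone ι from fun _ _ hC => this hC
  induction h with
  | act => exact antitone_const
  | sumL _ _ ih | sumR _ _ ih => exact ih.union antitone_const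
  | con _ ih => exact ih
  | com _ _ _ _ ih₁ ih₂ => exact ih₁.union ih₂
  | parL Q _ _ _ ih => exact ih.union (iAstarPred_antitone env Q)
  | parR P _ _ _ ih => exact ih.union (iAstarPred_antitone env P)
  | restr A _ _ ih => exact fun _ _ hC => Set.sdiff_subset_sdiff_left (ih hC)

end CCSlm
end

section
/- Antitonicity of eschews: for all predictions ι, ι′ and blocking relations B, B′ of single-clock CCSˡᵐ, if ι′ ⊑ ι, B′ ⊑ B, and eschews(ι, B) holds, then eschews(ι′, B′) holds. -/
/- Since horizons only grow along `≤` while antitone predictions only shrink, `eschews ι B`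
depends on `B` only through `[B]`: it says that no label of `[B](C)` has its complement
predicted at `C`. In that form it is visibly antitone in `[B]` and in each `ι(C)`. -/

namespace CCSlm

section

variable {Name : Type}

theorem subset_blockSet_of_mem {B : Blocking Name} {C : Horizon} {L : Set (Label Name)}
    (hCL : (C, L) ∈ B) : L ⊆ blockSet B C :=
  fun _ hℓ => ⟨C, L, hCL, le_rfl, hℓ⟩

theorem eschews_iff_forall_bar_notMem {ι : Pred Name} {B : Blocking Name} :
    eschews ι B ↔ ∀ C L, (C, L) ∈ B → ∀ ℓ ∈ L, ℓ.bar ∉ ι C := by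
  simp only [eschews, Set.eq_empty_iff_forall_notMem, Set.mem_inter_iff, Set.mem_image]
  exact forall₃_congr fun C L _ =>
    ⟨fun h ℓ hℓ hbar => h _ ⟨hbar, ℓ, hℓ, rfl⟩, fun h _ ⟨hbar, ℓ, hℓ, hℓbar⟩ =>
      h ℓ hℓ (hℓbar ▸ hbar)⟩

theorem eschews.bar_notMem_of_mem_blockSet {ι : Pred Name} {B : Blocking Name}
    (hι : Antitone ι) (h : eschews ι B) {C : Horizon} {ℓ : Label Name}
    (hℓ : ℓ ∈ blockSet B C) : ℓ.bar ∉ ι C := by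
  obtain ⟨C₀, L₀, hB, hC₀, hℓL₀⟩ := hℓ
  exact fun hbar => eschews_iff_forall_bar_notMem.mp h C₀ L₀ hB ℓ hℓL₀ (hι hC₀ hbar)

theorem eschews_of_forall_bar_notMem_blockSet {ι : Pred Name} {B : Blocking Name}
    (h : ∀ C, ∀ ℓ ∈ blockSet B C, ℓ.bar ∉ ι C) : eschews ι B :=
  eschews_iff_forall_bar_notMem.mpr fun C _ hCL ℓ hℓ => h C ℓ (subset_blockSet_of_mem hCL hℓ)

end

theorem eschews_antitone_general {Name : Type} (ι ι' : Pred Name) (B B' : Blocking Name)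
    (hι : ∀ C C' : Horizon, C ≤ C' → ι C' ⊆ ι C)
    (hle : pleq ι' ι) (hBle : bleq B' B)
    (h : eschews ι B) :
    eschews ι' B' :=
  eschews_of_forall_bar_notMem_blockSet fun C _ hℓ hbar =>
    h.bar_notMem_of_mem_blockSet hι (hBle C hℓ) (hle C hbar)

/-- Antitonicity of eschews: if ι′ ⊑ ι, B′ ⊑ B and eschews(ι, B), then eschews(ι′, B′)
(for predictions that are antitone in the clock horizon, as all LTS predictions are). -/
theorem eschews_antitone {Name : Type} (ι ι' : Pred Name) (B B' : Blocking Name)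
    (hι : ∀ C C' : Horizon, C ≤ C' → ι C' ⊆ ι C)
    (hι' : ∀ C C' : Horizon, C ≤ C' → ι' C' ⊆ ι' C)
    (hle : pleq ι' ι) (hBle : bleq B' B)
    (h : eschews ι B) :
    eschews ι' B' :=
  eschews_antitone_general ι ι' B B' hι hle hBle h

end CCSlm
end

section
/- Conservative extension of CCS: for processes P, Q in the clock-free, priority-free fragment of single-clock CCSˡᵐ (all inactive subterms are 0_⊥, no prefix has action σ, and every prefix α:L′.P has empty blocking set L′ = ∅) and every action α, there exist a blocking relation B and prediction ι with P —α:B[ι]→ Q derivable in the strategic LTS of CCSˡᵐ if and only if P —α→ Q is derivable in Milner's CCS (with the same prefix, sum, parallel, restriction and recursion structure). -/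
/-!
In the clock-free, priority-free fragment every blocking relation produced by a strategic
derivation has only empty label sets, so all `eschews` side conditions hold vacuously, and σ is
never the action of a transition, so the clock side conditions of (Par) are vacuous and (Com)
always yields τ. The two rule systems then match rule for rule, and both directions are
inductions on derivations.
-/

namespace CCSlm

variable {Name PName : Type} {env : PName → Proc Name PName}

def NoBlocking (B : Blocking Name) : Prop :=
  ∀ C L, (C, L) ∈ B → L = ∅

lemma NoBlocking.eschews {B : Blocking Name} (hB : NoBlocking B) (ι : Pred Name) :
    eschews ι B := by
  intro C L hCL
  simp [hB C L hCL]

lemma syncAct_eq_tau {ℓ : Label Name} (hℓ : ℓ ≠ .clock) : syncAct ℓ = .tau := by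
  cases ℓ with
  | clock => exact absurd rfl hℓ
  | _ => rfl

lemma Step.ne_clock_of_clockFree (henv : ∀ p, ClockFree (env p))
    {P Q : Proc Name PName} {α : Act Name} {B : Blocking Name} {ι : Pred Name}
    (h : Step env P α B ι Q) (hP : ClockFree P) : α ≠ .lab .clock := by
  induction h with
  | act => exact hP.1
  | sumL _ _ ih => exact ih hP.1
  | sumR _ _ ih => exact ih hP.2
  | con _ ih => exact ih (henv _)
  | com _ _ _ _ ih₁ _ =>
      rw [syncAct_eq_tau fun h => ih₁ hP.1 (congrArg _ h)]
      exact nofun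
  | parL _ _ _ _ ih => exact ih hP.1
  | parR _ _ _ _ ih => exact ih hP.2
  | restr _ _ _ ih => exact ih hP

lemma Step.noBlocking_of_clockFree (henv : ∀ p, ClockFree (env p))
    {P Q : Proc Name PName} {α : Act Name} {B : Blocking Name} {ι : Pred Name}
    (h : Step env P α B ι Q) (hP : ClockFree P) : NoBlocking B := by
  induction h with
  | act =>
      rintro C L hCL
      rw [(Prod.mk.inj (Set.mem_singleton_iff.mp hCL)).2, hP.2.1]
  | sumL _ _ ih => exact ih hP.1
  | sumR _ _ ih => exact ih hP.2
  | con _ ih => exact ih (henv _)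
  | com _ _ _ _ ih₁ ih₂ =>
      rintro C L (hCL | hCL)
      exacts [ih₁ hP.1 C L hCL, ih₂ hP.2 C L hCL]
  | parL _ _ _ _ ih => exact ih hP.1
  | parR _ _ _ _ ih => exact ih hP.2
  | restr _ _ _ ih =>
      rintro C L ⟨C', L', hCL', hq⟩
      rw [(Prod.mk.inj hq).2, ih hP C' L' hCL', Set.empty_sdiff]

lemma Step.toCCSStep (henv : ∀ p, ClockFree (env p))
    {P Q : Proc Name PName} {α : Act Name} {B : Blocking Name} {ι : Pred Name}
    (h : Step env P α B ι Q) (hP : ClockFree P) : CCSStep env P α Q := by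
  induction h with
  | act α L P => exact .act α L P
  | sumL N _ ih => exact .sumL N (ih hP.1)
  | sumR M _ ih => exact .sumR M (ih hP.2)
  | con _ ih => exact .con (ih (henv _))
  | com h₁ _ _ _ ih₁ ih₂ =>
      rw [syncAct_eq_tau fun h => h₁.ne_clock_of_clockFree henv hP.1 (congrArg _ h)]
      exact .com _ (ih₁ hP.1) (ih₂ hP.2)
  | parL Q _ _ _ ih => exact .parL Q (ih hP.1)
  | parR P _ _ _ ih => exact .parR P (ih hP.2)
  | restr A _ hA ih => exact .restr A (ih hP) hA

lemma CCSStep.exists_step (henv : ∀ p, ClockFree (env p))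
    {P Q : Proc Name PName} {α : Act Name}
    (h : CCSStep env P α Q) (hP : ClockFree P) : ∃ B ι, Step env P α B ι Q := by
  induction h with
  | act α L P => exact ⟨_, _, .act α L P⟩
  | sumL N _ ih =>
      obtain ⟨B, ι, h⟩ := ih hP.1
      exact ⟨B, _, .sumL N h⟩
  | sumR M _ ih =>
      obtain ⟨B, ι, h⟩ := ih hP.2
      exact ⟨B, _, .sumR M h⟩
  | con _ ih =>
      obtain ⟨B, ι, h⟩ := ih (henv _)
      exact ⟨B, ι, .con h⟩
  | com ℓ _ _ ih₁ ih₂ =>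
      obtain ⟨B₁, ι₁, h₁⟩ := ih₁ hP.1
      obtain ⟨B₂, ι₂, h₂⟩ := ih₂ hP.2
      rw [← syncAct_eq_tau fun h => h₁.ne_clock_of_clockFree henv hP.1 (congrArg _ h)]
      refine ⟨_, _, .com h₁ h₂ ?_ ?_⟩
      exacts [(h₂.noBlocking_of_clockFree henv hP.2).eschews ι₁,
        (h₁.noBlocking_of_clockFree henv hP.1).eschews ι₂]
  | parL Q _ ih =>
      obtain ⟨B, ι, h⟩ := ih hP.1
      exact ⟨B, _, .parL Q h (absurd · (h.ne_clock_of_clockFree henv hP.1))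
        ((h.noBlocking_of_clockFree henv hP.1).eschews _)⟩
  | parR P _ ih =>
      obtain ⟨B, ι, h⟩ := ih hP.2
      exact ⟨B, _, .parR P h (absurd · (h.ne_clock_of_clockFree henv hP.2))
        ((h.noBlocking_of_clockFree henv hP.2).eschews _)⟩
  | restr A _ hA ih =>
      obtain ⟨B, ι, h⟩ := ih hP
      exact ⟨_, _, .restr A h hA⟩

theorem conservative_extension_of_CCS_general {Name PName : Type} (env : PName → Proc Name PName)
    (henv : ∀ p, ClockFree (env p))
    (P Q : Proc Name PName) (hP : ClockFree P)
    (α : Act Name) :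
    (∃ B ι, Step env P α B ι Q) ↔ CCSStep env P α Q :=
  ⟨fun ⟨_, _, h⟩ => h.toCCSStep henv hP, fun h => h.exists_step henv hP⟩

/-- Conservative extension of Milner's CCS: on the clock-free, priority-free fragment,
the strategic transitions of CCSˡᵐ (for some blocking B and prediction ι) coincide with
Milner's CCS transitions. -/
theorem conservative_extension_of_CCS {Name PName : Type} (env : PName → Proc Name PName)
    (henv : ∀ p, ClockFree (env p))
    (P Q : Proc Name PName) (hP : ClockFree P) (hQ : ClockFree Q)
    (α : Act Name) :
    (∃ B ι, Step env P α B ι Q) ↔ CCSStep env P α Q :=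
  conservative_extension_of_CCS_general env henv P Q hP α

end CCSlm
end

section
/- Clock determinism of observable processes: if P is an observable process (modulo a congruence ≅) of single-clock CCSˡᵐ, Q is a derivative of P, and Q —σ:B1[ι1]→ Q1 and Q —σ:B2[ι2]→ Q2 are two transitions of Q with the clock action σ, then Q1 ≅ Q2. -/
namespace CCSlm

/-!
If two σ-successors of a derivative of an observable process were not congruent, observability
would make each σ-step predict the other, i.e. put σ into its own prediction. But the prediction
of a σ-step never contains σ: along its derivation the rules only add labels other than σ (Sum),
predictions of σ-steps (Com), or `iA*` of a parallel partner without a clock (Par), which cannot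
mention σ.
-/

section ClockPrediction

variable {Name PName : Type} {env : PName → Proc Name PName}

theorem HasClock.of_clock_mem_wilAgo {rec : Horizon → Proc Name PName → Set (Label Name)}
    (hrec : ∀ C P, Label.clock ∈ rec C P → HasClock env P) (C : Horizon) :
    ∀ P : Proc Name PName, Label.clock ∈ wilAgo env rec C P → HasClock env P
  | .name p, h => .name p (hrec C (env p) h)
  | .par P Q, h => h.elim (fun h => .parL Q (of_clock_mem_wilAgo hrec C P h))
      (fun h => .parR P (of_clock_mem_wilAgo hrec C Q h))
  | .sum M N, h => h.elim (fun h => .sumL N (of_clock_mem_wilAgo hrec C M h))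
      (fun h => .sumR M (of_clock_mem_wilAgo hrec C N h))
  | .restr P A, h => .restr A (of_clock_mem_wilAgo hrec C P h.1)
  | .nil _, h => h.elim
  | .pre (.lab .clock) L P, _ => .preClock L P
  | .pre (.lab (.pos _)) L P, h =>
      .preCont _ L (of_clock_mem_wilAgo hrec C P (h.resolve_left nofun))
  | .pre (.lab (.neg _)) L P, h =>
      .preCont _ L (of_clock_mem_wilAgo hrec C P (h.resolve_left nofun))
  | .pre .tau L P, h => .preCont _ L (of_clock_mem_wilAgo hrec C P (h.resolve_left nofun))

theorem HasClock.of_clock_mem_wilA {C : Horizon} {P : Proc Name PName} :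
    ∀ {n : ℕ}, Label.clock ∈ wilA env n C P → HasClock env P
  | 0 => of_clock_mem_wilAgo (fun _ _ h => h.elim) C P
  | _ + 1 => of_clock_mem_wilAgo (fun _ _ => of_clock_mem_wilA) C P

theorem HasClock.of_clock_mem_iAstar {C : Horizon} {P : Proc Name PName}
    (h : Label.clock ∈ iAstar env C P) : HasClock env P :=
  let ⟨_, hn⟩ := Set.mem_iUnion.1 h
  of_clock_mem_wilA hn

theorem Step.clock_notMem_pred {Q Q' : Proc Name PName} {α : Act Name} {B : Blocking Name}
    {ι : Pred Name} (h : Step env Q α B ι Q') (hα : α = .lab .clock) (C : Horizon) :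
    Label.clock ∉ ι C := by
  induction h with
  | act => exact Set.notMem_empty _
  | sumL _ _ ih | sumR _ _ ih =>
    subst hα
    exact fun hmem => hmem.elim (ih rfl) fun hN => hN.2 rfl
  | con _ ih => exact ih hα
  | @com _ _ _ _ ℓ _ _ _ _ _ _ _ _ ih1 ih2 =>
    cases ℓ <;> cases hα
    exact fun hmem => hmem.elim (ih1 rfl) (ih2 rfl)
  | parL _ _ hσ _ ih | parR _ _ hσ _ ih =>
    exact fun hmem => hmem.elim (ih hα) fun h => hσ hα (.of_clock_mem_iAstar h)
  | restr _ _ _ ih => exact fun hmem => ih hα hmem.1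

end ClockPrediction

theorem clock_determinism_of_observable_general {Name PName : Type} (env : PName → Proc Name PName)
    (cong : Proc Name PName → Proc Name PName → Prop)
    {P Q Q1 Q2 : Proc Name PName} {B1 B2 : Blocking Name} {ι1 ι2 : Pred Name}
    (hobs : Observable env cong P)
    (hder : Deriv env P Q)
    (h1 : Step env Q (.lab .clock) B1 ι1 Q1)
    (h2 : Step env Q (.lab .clock) B2 ι2 Q2) :
    cong Q1 Q2 := by
  by_contra hne
  exact h2.clock_notMem_pred rfl true
    (hobs Q Q1 Q2 _ _ B1 B2 ι1 ι2 hder h1 h2 (.inr hne) .clock .clock rfl rfl).1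

/-- Clock determinism of observable processes: any two σ-transitions of a derivative of an
observable process lead to congruent states. -/
theorem clock_determinism_of_observable {Name PName : Type} (env : PName → Proc Name PName)
    (cong : Proc Name PName → Proc Name PName → Prop)
    (hcong : IsCongruence cong)
    {P Q Q1 Q2 : Proc Name PName} {B1 B2 : Blocking Name} {ι1 ι2 : Pred Name}
    (hobs : Observable env cong P)
    (hder : Deriv env P Q)
    (h1 : Step env Q (.lab .clock) B1 ι1 Q1)
    (h2 : Step env Q (.lab .clock) B2 ι2 Q2) :
    cong Q1 Q2 :=
  clock_determinism_of_observable_general env cong hobs hder h1 h2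

end CCSlm
end

section
/- Clock stability (Constructivity Assumption): for every well-formed process P of single-clock CCSˡᵐ and every derivable strategic transition P —α:B[ι]→ Q, the clock horizon is preserved, clk(Q) = clk(P), and if α = σ then clk(P) = ⊤. -/
/-!
Induction on the derivation. The clock horizon of a parallel composition, a restriction or a
process name is determined by its components, so only (Act) and (Sum) can change it, and these
are exactly the cases well-formedness controls: a prefix has the horizon of its continuation,
and both summands of a sum have the same horizon. A σ-transition originates from a σ-prefix,
which puts σ among the free labels, and every rule carries this out to the whole process.
-/

namespace CCSlm

variable {Name PName : Type} {env : PName → Proc Name PName}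

theorem hasClock_par_iff {P Q : Proc Name PName} :
    HasClock env (.par P Q) ↔ HasClock env P ∨ HasClock env Q := by
  constructor
  · rintro (_ | _ | _ | ⟨_, h⟩ | ⟨_, h⟩)
    · exact .inl h
    · exact .inr h
  · rintro (h | h)
    · exact .parL Q h
    · exact .parR P h

theorem hasClock_sum_iff {M N : Proc Name PName} :
    HasClock env (.sum M N) ↔ HasClock env M ∨ HasClock env N := by
  constructor
  · rintro (_ | _ | _ | _ | _ | ⟨_, h⟩ | ⟨_, h⟩)
    · exact .inl h
    · exact .inr h
  · rintro (h | h)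
    · exact .sumL N h
    · exact .sumR M h

theorem hasClock_restr_iff {P : Proc Name PName} {A : Set Name} :
    HasClock env (.restr P A) ↔ HasClock env P :=
  ⟨fun | .restr _ h => h, .restr A⟩

theorem hasClock_name_iff {p : PName} :
    HasClock env (.name p) ↔ HasClock env (env p) :=
  ⟨fun | .name _ h => h, .name p⟩

theorem clk_eq_true_iff {P : Proc Name PName} : clk env P = true ↔ HasClock env P := by
  simp [clk]

theorem clk_congr {P Q : Proc Name PName} (h : HasClock env P ↔ HasClock env Q) :
    clk env P = clk env Q := by
  classical
  exact if_congr h rfl rfl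

theorem Step.hasClock_of_clock {P Q : Proc Name PName} {α : Act Name} {B : Blocking Name}
    {ι : Pred Name} (h : Step env P α B ι Q) (hα : α = .lab .clock) : HasClock env P := by
  induction h with
  | act _ L P => subst hα; exact .preClock L P
  | sumL N _ ih => exact .sumL N (ih hα)
  | sumR M _ ih => exact .sumR M (ih hα)
  | con _ ih => exact .name _ (ih hα)
  | @com _ P₂ _ _ ℓ _ _ _ _ _ _ _ _ ih₁ _ =>
    cases ℓ with
    | clock => exact .parL P₂ (ih₁ rfl)
    | pos _ | neg _ => cases hα
  | parL Q _ _ _ ih => exact .parL Q (ih hα)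
  | parR P _ _ _ ih => exact .parR P (ih hα)
  | restr A _ _ ih => exact .restr A (ih hα)

theorem Step.hasClock_iff (henv : ∀ p, WF env (env p)) {P Q : Proc Name PName}
    {α : Act Name} {B : Blocking Name} {ι : Pred Name} (hP : WF env P)
    (h : Step env P α B ι Q) : HasClock env Q ↔ HasClock env P := by
  induction h with
  | act => exact hP.2.symm
  | sumL _ _ ih =>
    obtain ⟨hM, -, hMN⟩ := hP
    rw [ih hM, hasClock_sum_iff, ← hMN, or_self]
  | sumR _ _ ih =>
    obtain ⟨-, hN, hMN⟩ := hP
    rw [ih hN, hasClock_sum_iff, hMN, or_self]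
  | @con p _ _ _ _ _ ih => rw [ih (henv p), hasClock_name_iff]
  | com _ _ _ _ ih₁ ih₂ => rw [hasClock_par_iff, hasClock_par_iff, ih₁ hP.1, ih₂ hP.2]
  | parL _ _ _ _ ih => rw [hasClock_par_iff, hasClock_par_iff, ih hP.1]
  | parR _ _ _ _ ih => rw [hasClock_par_iff, hasClock_par_iff, ih hP.2]
  | restr _ _ _ ih => rw [hasClock_restr_iff, hasClock_restr_iff, ih hP]

/-- Clock stability (Constructivity Assumption): for well-formed processes, strategic
transitions preserve the clock horizon, and a σ-transition requires clk(P) = ⊤. -/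
theorem clock_stability {Name PName : Type} (env : PName → Proc Name PName)
    (henv : ∀ p, WF env (env p))
    {P Q : Proc Name PName} {α : Act Name} {B : Blocking Name} {ι : Pred Name}
    (hP : WF env P)
    (h : Step env P α B ι Q) :
    clk env Q = clk env P ∧ (α = .lab .clock → clk env P = true) := by
  exact ⟨clk_congr (h.hasClock_iff henv hP),
    fun hα => clk_eq_true_iff.mpr (h.hasClock_of_clock hα)⟩

end CCSlm
end
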